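/- arXiv:1904.04538 — 2 statements merged into one kernel-verified Lean document; each statement's English description precedes it below -/
import Mathlib

section
/- Let ε > 0, τ ∈ ℝ, and θ ∈ ℝ with ε⁴θ² ≠ 4. Then ∫₀^τ 2 ( ∫₀^s θ² cos(θ(τ−σ)) e^{2iσ/ε²} dσ ) ds = ( 2τε²θ² / (4 − ε⁴θ²) ) · [ 2i cos(θτ) − ε²θ sin(θτ) ] + ( 2ε⁴θ² / (4 − ε⁴θ²)² ) · [ (4 + ε⁴θ²) cos(θτ) − (4 + ε⁴θ²) e^{2iτ/ε²} + 4iε²θ sin(θτ) ]. -/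
/-!
Writing `cos (θ (τ - σ)) = (e^{iθ(τ-σ)} + e^{-iθ(τ-σ)}) / 2` turns the integrand into a combination
of two exponentials `e^{cσ}` with `c = i (2 ∓ ε²θ) / ε²`; these exponents are nonzero exactly
because `ε⁴θ² ≠ 4`. Each exponential integrates twice in closed form,
`∫₀^τ ∫₀^s e^{cσ} dσ ds = (e^{cτ} - 1 - cτ) / c²`, and the stated formula is what remains after
expressing `cos (θτ)` and `sin (θτ)` through `u = e^{iθτ}` and clearing denominators.
-/

open Complex intervalIntegral

theorem integral_integral_exp_mul_complex {c : ℂ} (hc : c ≠ 0) (τ : ℝ) :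
    ∫ s in (0:ℝ)..τ, ∫ σ in (0:ℝ)..s, exp (c * σ) = (exp (c * τ) - 1 - c * τ) / c ^ 2 := by
  have inner (s : ℝ) : ∫ σ in (0:ℝ)..s, exp (c * σ) = exp (c * s) / c - 1 / c := by
    rw [integral_exp_mul_complex hc, ofReal_zero, mul_zero, exp_zero, sub_div]
  simp_rw [inner]
  rw [integral_sub ((by fun_prop : Continuous _).intervalIntegrable _ _) intervalIntegrable_const,
    integral_div, integral_exp_mul_complex hc, integral_const]
  simp only [ofReal_zero, mul_zero, exp_zero, sub_zero, real_smul]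
  field_simp

theorem integral_integral_add {F : Type*} [NormedAddCommGroup F] [NormedSpace ℝ F]
    {f g : ℝ → F} (hf : Continuous f) (hg : Continuous g) (a b : ℝ) :
    ∫ s in a..b, ∫ σ in a..s, (f σ + g σ)
      = (∫ s in a..b, ∫ σ in a..s, f σ) + ∫ s in a..b, ∫ σ in a..s, g σ := by
  have inner (s : ℝ) : ∫ σ in a..s, (f σ + g σ) = (∫ σ in a..s, f σ) + ∫ σ in a..s, g σ :=
    integral_add (hf.intervalIntegrable _ _) (hg.intervalIntegrable _ _)
  simp_rw [inner]
  exact integral_add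
    ((continuous_primitive (fun _ _ => hf.intervalIntegrable _ _) a).intervalIntegrable _ _)
    ((continuous_primitive (fun _ _ => hg.intervalIntegrable _ _) a).intervalIntegrable _ _)

theorem Complex.cos_mul_sub_mul_exp (θ τ σ a : ℂ) :
    cos (θ * (τ - σ)) * exp (a * σ)
      = (exp (θ * τ * I) * exp ((a - θ * I) * σ)
          + exp (-(θ * τ * I)) * exp ((a + θ * I) * σ)) / 2 := by
  rw [cos, div_mul_eq_mul_div, add_mul, ← exp_add, ← exp_add, ← exp_add, ← exp_add]
  ring_nf

theorem rho_coefficient_rational_identity {E Θ T u : ℂ} (w : ℂ) (hE : E ≠ 0)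
    (h4 : 4 - E ^ 4 * Θ ^ 2 ≠ 0) (hu : u ≠ 0) :
    2 * (Θ ^ 2 / 2 * u * ((w / u - 1 - I * (2 - E ^ 2 * Θ) / E ^ 2 * T)
          / (I * (2 - E ^ 2 * Θ) / E ^ 2) ^ 2)
      + Θ ^ 2 / 2 * u⁻¹ * ((w * u - 1 - I * (2 + E ^ 2 * Θ) / E ^ 2 * T)
          / (I * (2 + E ^ 2 * Θ) / E ^ 2) ^ 2))
    = (2 * T * E ^ 2 * Θ ^ 2 / (4 - E ^ 4 * Θ ^ 2))
        * (2 * I * ((u + u⁻¹) / 2) - E ^ 2 * Θ * ((u⁻¹ - u) * I / 2))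
      + (2 * E ^ 4 * Θ ^ 2 / (4 - E ^ 4 * Θ ^ 2) ^ 2)
        * ((4 + E ^ 4 * Θ ^ 2) * ((u + u⁻¹) / 2) - (4 + E ^ 4 * Θ ^ 2) * w
          + 4 * I * E ^ 2 * Θ * ((u⁻¹ - u) * I / 2)) := by
  have hsub : (4 : ℂ) - E ^ 4 * Θ ^ 2 = (2 - E ^ 2 * Θ) * (2 + E ^ 2 * Θ) := by ring
  rw [hsub] at h4 ⊢
  -- `field_simp` only clears the two factors of the denominator once they are atoms.
  generalize ha : 2 - E ^ 2 * Θ = a at *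
  generalize hb : 2 + E ^ 2 * Θ = b at *
  obtain ⟨ha0, hb0⟩ := mul_ne_zero_iff.mp h4
  field_simp
  ring_nf
  simp only [I_sq, I_pow_three, I_pow_four]
  rw [← ha, ← hb]
  ring

theorem integral_integral_sq_mul_cos_mul_exp {E Θ : ℂ} (hE : E ≠ 0)
    (h4 : 4 - E ^ 4 * Θ ^ 2 ≠ 0) (τ : ℝ) :
    ∫ s in (0:ℝ)..τ, ∫ σ in (0:ℝ)..s, Θ ^ 2 * cos (Θ * (τ - σ)) * exp (2 * I * σ / E ^ 2)
      = Θ ^ 2 / 2 * exp (Θ * τ * I)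
          * ((exp (2 * I * τ / E ^ 2) / exp (Θ * τ * I) - 1 - I * (2 - E ^ 2 * Θ) / E ^ 2 * τ)
            / (I * (2 - E ^ 2 * Θ) / E ^ 2) ^ 2)
        + Θ ^ 2 / 2 * (exp (Θ * τ * I))⁻¹
          * ((exp (2 * I * τ / E ^ 2) * exp (Θ * τ * I) - 1 - I * (2 + E ^ 2 * Θ) / E ^ 2 * τ)
            / (I * (2 + E ^ 2 * Θ) / E ^ 2) ^ 2) := by
  set c₁ := I * (2 - E ^ 2 * Θ) / E ^ 2
  set c₂ := I * (2 + E ^ 2 * Θ) / E ^ 2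
  obtain ⟨hc₁, hc₂⟩ : c₁ ≠ 0 ∧ c₂ ≠ 0 := by
    rw [show (4 : ℂ) - E ^ 4 * Θ ^ 2 = (2 - E ^ 2 * Θ) * (2 + E ^ 2 * Θ) by ring] at h4
    obtain ⟨hm, hp⟩ := mul_ne_zero_iff.mp h4
    exact ⟨by simp [c₁, hm, hE], by simp [c₂, hp, hE]⟩
  have integrand (σ : ℝ) :
      Θ ^ 2 * cos (Θ * (τ - σ)) * exp (2 * I * σ / E ^ 2)
        = Θ ^ 2 / 2 * exp (Θ * τ * I) * exp (c₁ * σ)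
          + Θ ^ 2 / 2 * (exp (Θ * τ * I))⁻¹ * exp (c₂ * σ) := by
    have := cos_mul_sub_mul_exp Θ τ σ (2 * I / E ^ 2)
    rw [show 2 * I / E ^ 2 - Θ * I = c₁ by simp only [c₁]; field_simp,
      show 2 * I / E ^ 2 + Θ * I = c₂ by simp only [c₂]; field_simp, exp_neg] at this
    rw [mul_assoc, show 2 * I * σ / E ^ 2 = 2 * I / E ^ 2 * σ by ring, this]
    ring
  have exp₁ : exp (c₁ * τ) = exp (2 * I * τ / E ^ 2) / exp (Θ * τ * I) := by
    rw [← exp_sub]; congr 1; simp only [c₁]; field_simp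
  have exp₂ : exp (c₂ * τ) = exp (2 * I * τ / E ^ 2) * exp (Θ * τ * I) := by
    rw [← exp_add]; congr 1; simp only [c₂]; field_simp
  simp_rw [integrand]
  rw [integral_integral_add (by fun_prop) (by fun_prop)]
  simp_rw [integral_const_mul, integral_integral_exp_mul_complex hc₁,
    integral_integral_exp_mul_complex hc₂, exp₁, exp₂]

/-- The Gautschi-type quadrature coefficient `ρ_l = ∫₀^τ 2β_l(s) ds`, where
`β_l(s) = ∫₀^s θ² cos(θ(τ−σ)) e^{2iσ/ε²} dσ`. -/
theorem rho_coefficient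
    (ε τ θ : ℝ) (hε : 0 < ε) (h : ε ^ 4 * θ ^ 2 ≠ 4) :
    (∫ s in (0:ℝ)..τ, 2 * ∫ σ in (0:ℝ)..s,
        ((θ ^ 2 * Real.cos (θ * (τ - σ)) : ℝ) : ℂ)
          * Complex.exp (2 * Complex.I * (σ : ℂ) / (ε : ℂ) ^ 2))
      = (2 * (τ : ℂ) * (ε : ℂ) ^ 2 * (θ : ℂ) ^ 2
            / (4 - (ε : ℂ) ^ 4 * (θ : ℂ) ^ 2))
        * (2 * Complex.I * ((Real.cos (θ * τ) : ℝ) : ℂ)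
          - (ε : ℂ) ^ 2 * (θ : ℂ) * ((Real.sin (θ * τ) : ℝ) : ℂ))
      + (2 * (ε : ℂ) ^ 4 * (θ : ℂ) ^ 2 / (4 - (ε : ℂ) ^ 4 * (θ : ℂ) ^ 2) ^ 2)
        * ((4 + (ε : ℂ) ^ 4 * (θ : ℂ) ^ 2) * ((Real.cos (θ * τ) : ℝ) : ℂ)
          - (4 + (ε : ℂ) ^ 4 * (θ : ℂ) ^ 2)
            * Complex.exp (2 * Complex.I * (τ : ℂ) / (ε : ℂ) ^ 2)
          + 4 * Complex.I * (ε : ℂ) ^ 2 * (θ : ℂ)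
            * ((Real.sin (θ * τ) : ℝ) : ℂ)) := by
  have hE : (ε : ℂ) ≠ 0 := ofReal_ne_zero.mpr hε.ne'
  have h4 : (4 : ℂ) - (ε : ℂ) ^ 4 * (θ : ℂ) ^ 2 ≠ 0 := sub_ne_zero.mpr (by exact_mod_cast h.symm)
  have hcos : cos (θ * τ) = (exp (θ * τ * I) + (exp (θ * τ * I))⁻¹) / 2 := by
    rw [cos, ← exp_neg]; ring_nf
  have hsin : sin (θ * τ) = ((exp (θ * τ * I))⁻¹ - exp (θ * τ * I)) * I / 2 := by
    rw [sin, ← exp_neg]; ring_nf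
  push_cast
  rw [integral_const_mul, integral_integral_sq_mul_cos_mul_exp hE h4, hcos, hsin]
  exact rho_coefficient_rational_identity _ hE h4 (exp_ne_zero _)
end

section
/- Let ε > 0, τ ∈ ℝ, and θ ∈ ℝ with ε⁴θ² ≠ 4. Then ∫₀^τ 2θ² cos(θ(τ−s)) e^{is/ε²} cos(s/ε²) ds = θ sin(θτ) − ( ε²θ² / (4 − ε⁴θ²) ) · [ 2i e^{2iτ/ε²} − 2i cos(θτ) + ε²θ sin(θτ) ]. -/
/-!
Since `e^{ix} cos x = (e^{2ix} + 1)/2`, the integrand is `θ² cos(θ(τ - s)) (e^{cs} + 1)` with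
`c = 2i/ε²`. For any complex `c`, `θ`, the function `e^{cs} (c cos(θ(τ - s)) - θ sin(θ(τ - s)))`
is an antiderivative of `(c² + θ²) e^{cs} cos(θ(τ - s))`; the case `c = 0` gives the term
`θ sin(θτ)`, and `c = 2i/ε²` the other one, where `c² + θ² = -(4 - ε⁴θ²)/ε⁴ ≠ 0`.
-/

open Complex

theorem exp_mul_I_mul_cos (x : ℂ) : exp (x * I) * cos x = (exp (2 * x * I) + 1) / 2 := by
  rw [cos, mul_div_assoc', mul_add, ← exp_add, ← exp_add]
  ring_nf
  simp [add_comm]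

theorem hasDerivAt_exp_mul_antideriv (c θ τ z : ℂ) :
    HasDerivAt (fun z => exp (c * z) * (c * cos (θ * (τ - z)) - θ * sin (θ * (τ - z))))
      ((c ^ 2 + θ ^ 2) * (exp (c * z) * cos (θ * (τ - z)))) z := by
  have hlin : HasDerivAt (fun z => θ * (τ - z)) (-θ) z := by
    simpa using ((hasDerivAt_id z).const_sub τ).const_mul θ
  have hexp : HasDerivAt (fun z => exp (c * z)) (c * exp (c * z)) z := by
    simpa [mul_comm] using ((hasDerivAt_id z).const_mul c).cexp
  have htrig : HasDerivAt (fun z => c * cos (θ * (τ - z)) - θ * sin (θ * (τ - z)))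
      (c * (θ * sin (θ * (τ - z))) + θ ^ 2 * cos (θ * (τ - z))) z :=
    ((hlin.ccos.const_mul c).sub (hlin.csin.const_mul θ)).congr_deriv (by ring)
  exact (hexp.mul htrig).congr_deriv (by ring)

theorem mul_integral_exp_mul_cos_sub (c θ : ℂ) (τ : ℝ) :
    (c ^ 2 + θ ^ 2) * ∫ s in (0 : ℝ)..τ, exp (c * s) * cos (θ * (τ - s)) =
      c * exp (c * τ) - c * cos (θ * τ) + θ * sin (θ * τ) := by
  rw [← intervalIntegral.integral_const_mul, intervalIntegral.integral_eq_sub_of_hasDerivAt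
    (fun s _ => (hasDerivAt_exp_mul_antideriv c θ τ s).comp_ofReal)
    (by apply Continuous.intervalIntegrable; fun_prop)]
  simp only [sub_self, mul_zero, cos_zero, mul_one, sin_zero, sub_zero, ofReal_zero, exp_zero, one_mul]
  ring

theorem integral_exp_mul_cos_sub {c θ : ℂ} (τ : ℝ) (h : c ^ 2 + θ ^ 2 ≠ 0) :
    ∫ s in (0 : ℝ)..τ, exp (c * s) * cos (θ * (τ - s)) =
      (c * exp (c * τ) - c * cos (θ * τ) + θ * sin (θ * τ)) / (c ^ 2 + θ ^ 2) :=
  eq_div_of_mul_eq h (by rw [mul_comm]; exact mul_integral_exp_mul_cos_sub c θ τ)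

theorem sq_mul_integral_cos_sub (θ : ℂ) (τ : ℝ) :
    θ ^ 2 * ∫ s in (0 : ℝ)..τ, cos (θ * (τ - s)) = θ * sin (θ * τ) := by
  simpa using mul_integral_exp_mul_cos_sub 0 θ τ

/-- The quadrature coefficient `χ̇_l¹` of the exponential wave integrator:
`∫₀^τ 2θ² cos(θ(τ−s)) e^{is/ε²} cos(s/ε²) ds
  = θ sin(θτ) − (ε²θ²/(4 − ε⁴θ²)) [2i e^{2iτ/ε²} − 2i cos(θτ) + ε²θ sin(θτ)]`. -/
theorem chi1_dot_coefficient
    (ε τ θ : ℝ) (hε : 0 < ε) (h : ε ^ 4 * θ ^ 2 ≠ 4) :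
    (∫ s in (0:ℝ)..τ,
        ((2 * θ ^ 2 * Real.cos (θ * (τ - s)) : ℝ) : ℂ)
          * Complex.exp (Complex.I * (s : ℂ) / (ε : ℂ) ^ 2)
          * ((Real.cos (s / ε ^ 2) : ℝ) : ℂ))
      = (θ : ℂ) * ((Real.sin (θ * τ) : ℝ) : ℂ)
        - ((ε : ℂ) ^ 2 * (θ : ℂ) ^ 2 / (4 - (ε : ℂ) ^ 4 * (θ : ℂ) ^ 2))
          * (2 * Complex.I * Complex.exp (2 * Complex.I * (τ : ℂ) / (ε : ℂ) ^ 2)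
            - 2 * Complex.I * ((Real.cos (θ * τ) : ℝ) : ℂ)
            + (ε : ℂ) ^ 2 * (θ : ℂ) * ((Real.sin (θ * τ) : ℝ) : ℂ)) := by
  set c : ℂ := 2 * I / (ε : ℂ) ^ 2 with hc
  have hε0 : (ε : ℂ) ≠ 0 := by exact_mod_cast hε.ne'
  have hres : (4 : ℂ) - (ε : ℂ) ^ 4 * (θ : ℂ) ^ 2 ≠ 0 := by
    rw [sub_ne_zero]; exact_mod_cast h.symm
  have hden : c ^ 2 + (θ : ℂ) ^ 2 = -(4 - (ε : ℂ) ^ 4 * (θ : ℂ) ^ 2) / (ε : ℂ) ^ 4 := by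
    rw [hc, div_pow, mul_pow, I_sq]
    field_simp
    ring
  have hden_ne : c ^ 2 + (θ : ℂ) ^ 2 ≠ 0 := by
    rw [hden]
    exact div_ne_zero (neg_ne_zero.mpr hres) (pow_ne_zero _ hε0)
  have hintegrand : (fun s : ℝ => ((2 * θ ^ 2 * Real.cos (θ * (τ - s)) : ℝ) : ℂ)
      * Complex.exp (Complex.I * (s : ℂ) / (ε : ℂ) ^ 2) * ((Real.cos (s / ε ^ 2) : ℝ) : ℂ)) =
      fun s : ℝ => (θ : ℂ) ^ 2 * (exp (c * s) * cos (θ * (τ - s)) + cos (θ * (τ - s))) := by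
    funext s
    have hsq := exp_mul_I_mul_cos (s / (ε : ℂ) ^ 2)
    rw [← mul_div_right_comm, mul_comm _ I] at hsq
    push_cast
    rw [mul_assoc _ (exp _), hsq, hc]
    ring_nf
  rw [hintegrand, intervalIntegral.integral_const_mul, intervalIntegral.integral_add
      (by apply Continuous.intervalIntegrable; fun_prop)
      (by apply Continuous.intervalIntegrable; fun_prop),
    mul_add, sq_mul_integral_cos_sub, integral_exp_mul_cos_sub τ hden_ne]
  push_cast
  rw [hden, show c * τ = 2 * I * τ / (ε : ℂ) ^ 2 by rw [hc]; ring, hc]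
  field_simp
  ring
end
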